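/- arXiv:1509.07624 — 2 statements merged into one kernel-verified Lean document; each statement's English description precedes it below -/
import Mathlib

section
/- The lowering relation (d/dr + m/r) Q_n^{k,m}(r) = 2√((n+m)(n+k+1)) Q_n^{k+1,m-1}(r) holds for r ∈ (0,1). -/
/-!
Put `x = 2r² - 1`, so that `1 + x = 2r²`. For `Q = r^m p(x)` the operator `d/dr + m/r` then
gives `2 r^(m-1) (m p(x) + (1 + x) p'(x))`. For `p = P_n^{(k,m)}` the bracket equals
`(n + m) P_n^{(k+1,m-1)}`: expanding `P_n^{(k,m)}` in the products `(x - 1)^(n-s) (x + 1)^s`, the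
operator `m + (1 + x) d/dx` only shifts `s`, and the identity reduces to binomial absorption in the
second parameter and Pascal's rule in the first. Finally
`(n + m) N_n^{k+1,m-1} = (n + k + 1) N_n^{k,m}`, which turns the factor `n + m` into the normalized
constant `√((n + m)(n + k + 1))`.
-/

/-- The Jacobi polynomial `P_n^{(a,b)}(x)`. -/
noncomputable def jacobiP (n : ℕ) (a b : ℝ) (x : ℝ) : ℝ :=
  (1 / 2 ^ n) * ∑ s ∈ Finset.range (n + 1),
    (Real.Gamma (a + n + 1) / (Real.Gamma (a + n - s + 1) * (Nat.factorial s))) *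
    (Real.Gamma (b + n + 1) / (Real.Gamma (b + s + 1) * (Nat.factorial (n - s)))) *
    (x - 1) ^ (n - s) * (x + 1) ^ s
/-- The Jacobi orthogonality normalization `W_n^{a,b}`. -/
noncomputable def Wnorm (n : ℕ) (a b : ℝ) : ℝ :=
  2 ^ (a + b + 1) / (2 * n + a + b + 1) *
    (Real.Gamma (n + a + 1) * Real.Gamma (n + b + 1) /
      (Real.Gamma (n + a + b + 1) * (Nat.factorial n)))

/-- The normalization `N_n^{k,m} = W_n^{k,m} / 2^{2+k+m}`. -/
noncomputable def Nnorm (n k m : ℕ) : ℝ := Wnorm n k m / 2 ^ (2 + k + m)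

/-- The radial basis element `Q_n^{k,m}(r)`. -/
noncomputable def Q (n k m : ℕ) (r : ℝ) : ℝ :=
  r ^ m * jacobiP n k m (2 * r ^ 2 - 1) / Real.sqrt (Nnorm n k m)

open Finset Nat

theorem Real.Gamma_eq_factorial_of_eq (j : ℕ) {x : ℝ} (hx : x = j + 1) :
    Real.Gamma x = j ! := by
  rw [hx, Real.Gamma_nat_eq_factorial]

noncomputable def jacobiBasis (n s : ℕ) (x : ℝ) : ℝ := (x - 1) ^ (n - s) * (x + 1) ^ s

-- `(b + n).choose (b + s)` rather than `(b + n).choose (n - s)`: it vanishes for `s > n`, which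
-- absorbs the boundary term when the summation index is shifted.
theorem jacobiP_natCast (n a b : ℕ) (x : ℝ) :
    jacobiP n a b x = (1 / 2 ^ n) * ∑ s ∈ range (n + 1),
      ((a + n).choose s * (b + n).choose (b + s) : ℝ) * jacobiBasis n s x := by
  unfold jacobiP jacobiBasis
  congr 1
  refine sum_congr rfl fun s hs => ?_
  have hsn : s ≤ n := mem_range_succ_iff.mp hs
  rw [Nat.cast_choose ℝ (by omega : s ≤ a + n),
    Nat.cast_choose ℝ (by omega : b + s ≤ b + n),
    show b + n - (b + s) = n - s by omega,
    Real.Gamma_eq_factorial_of_eq (a + n) (by push_cast; ring),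
    Real.Gamma_eq_factorial_of_eq (a + n - s) (by push_cast [show s ≤ a + n by omega]; ring),
    Real.Gamma_eq_factorial_of_eq (b + n) (by push_cast; ring),
    Real.Gamma_eq_factorial_of_eq (b + s) (by push_cast; ring)]
  ring

theorem differentiable_jacobiP (n : ℕ) (a b : ℝ) : Differentiable ℝ (jacobiP n a b) := by
  unfold jacobiP
  fun_prop

theorem one_add_mul_deriv_jacobiBasis (n s : ℕ) (x : ℝ) :
    (1 + x) * deriv (jacobiBasis n s) x =
      s * jacobiBasis n s x + (n - s : ℕ) * jacobiBasis n (s + 1) x := by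
  have h : HasDerivAt (jacobiBasis n s)
      ((n - s : ℕ) * (x - 1) ^ (n - s - 1) * (x + 1) ^ s +
        (x - 1) ^ (n - s) * (s * (x + 1) ^ (s - 1))) x := by
    show HasDerivAt (fun y => (y - 1) ^ (n - s) * (y + 1) ^ s) _ x
    simpa using (((hasDerivAt_id x).sub_const 1).pow (n - s)).fun_mul
      (((hasDerivAt_id x).add_const 1).pow s)
  have hs : (s : ℝ) * ((1 + x) * (x + 1) ^ (s - 1)) = s * (x + 1) ^ s := by
    rcases s with _ | s
    · simp
    · rw [Nat.add_sub_cancel, pow_succ]; ring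
  rw [h.deriv]
  unfold jacobiBasis
  rw [Nat.sub_add_eq]
  linear_combination (x - 1) ^ (n - s) * hs

theorem sum_range_choose_mul_add_shift {R : Type*} [CommSemiring R] (m n : ℕ) (g : ℕ → R)
    (hg : g (n + 1) = 0) :
    ∑ s ∈ range (n + 1), (m.choose s : R) * (g s + g (s + 1)) =
      ∑ s ∈ range (n + 1), ((m + 1).choose s : R) * g s := by
  simp only [mul_add, sum_add_distrib]
  rw [sum_range_succ' (fun s => (m.choose s : R) * g s), sum_range_succ (fun s => _ * g (s + 1)),
    sum_range_succ' (fun s => ((m + 1).choose s : R) * g s)]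
  simp only [Nat.choose_succ_succ', Nat.choose_zero_right, Nat.cast_add, add_mul, sum_add_distrib,
    hg, mul_zero, add_zero]
  ring

section Lowering

variable {R : Type*} [CommRing R]

theorem choose_mul_lowering (n q s : ℕ) (a b : R) :
    ((q + 1 + n).choose (q + 1 + s) : R) * ((q + 1 + s : ℕ) * a + (n - s : ℕ) * b) =
      (n + q + 1) * ((q + n).choose (q + s) * a + (q + n).choose (q + (s + 1)) * b) := by
  have h₁ : ((q + n + 1 : ℕ) : R) * (q + n).choose (q + s) =
      (q + 1 + n).choose (q + 1 + s) * (q + 1 + s : ℕ) := by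
    rw [add_right_comm q 1 n, add_right_comm q 1 s]
    exact_mod_cast congrArg (Nat.cast : ℕ → R) (Nat.add_one_mul_choose_eq (q + n) (q + s))
  have h₂ : ((q + n).choose (q + (s + 1)) : R) * (q + n + 1 : ℕ) =
      (q + 1 + n).choose (q + 1 + s) * (n - s : ℕ) := by
    have h := Nat.choose_mul_succ_eq (q + n) (q + (s + 1))
    rw [show q + n + 1 - (q + (s + 1)) = n - s by omega] at h
    rw [add_right_comm q 1 n, add_right_comm q 1 s]
    exact_mod_cast congrArg (Nat.cast : ℕ → R) h
  push_cast at h₁ h₂ ⊢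
  linear_combination (-a) * h₁ - b * h₂

theorem sum_choose_lowering (n k q : ℕ) (f : ℕ → R) :
    ∑ s ∈ range (n + 1), ((k + n).choose s * (q + 1 + n).choose (q + 1 + s) : R) *
        ((q + 1 + s : ℕ) * f s + (n - s : ℕ) * f (s + 1)) =
      (n + q + 1) *
        ∑ s ∈ range (n + 1), ((k + 1 + n).choose s * (q + n).choose (q + s) : R) * f s := by
  simp only [mul_assoc, choose_mul_lowering, mul_left_comm _ ((n : R) + q + 1), ← mul_sum]
  rw [add_right_comm k 1 n, ← sum_range_choose_mul_add_shift (k + n) n _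
    (by simp [Nat.choose_eq_zero_of_lt] : (q + n).choose (q + (n + 1)) * f (n + 1) = 0)]

end Lowering

theorem jacobiP_lowering (n k q : ℕ) (x : ℝ) :
    (q + 1) * jacobiP n k (q + 1 : ℕ) x + (1 + x) * deriv (jacobiP n k (q + 1 : ℕ)) x =
      (n + q + 1) * jacobiP n (k + 1 : ℕ) q x := by
  have hbasis : ∀ s, DifferentiableAt ℝ (jacobiBasis n s) x := fun s => by
    unfold jacobiBasis; fun_prop
  rw [funext (jacobiP_natCast n k (q + 1)), jacobiP_natCast,
    deriv_const_mul _ (by fun_prop), deriv_fun_sum fun s _ => (hbasis s).const_mul _]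
  simp only [deriv_const_mul _ (hbasis _)]
  rw [mul_left_comm (_ + _ + 1 : ℝ), ← sum_choose_lowering]
  simp only [mul_sum, ← sum_add_distrib]
  refine sum_congr rfl fun s _ => ?_
  push_cast
  linear_combination (1 / 2 ^ n * ((k + n).choose s * (q + 1 + n).choose (q + 1 + s) : ℝ)) *
    one_add_mul_deriv_jacobiBasis n s x

theorem Wnorm_natCast (n a b : ℕ) :
    Wnorm n a b = 2 ^ (a + b + 1) / (2 * n + a + b + 1) *
      ((n + a)! * (n + b)! / ((n + a + b)! * n !) : ℝ) := by
  unfold Wnorm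
  rw [show (a : ℝ) + b + 1 = (a + b + 1 : ℕ) by push_cast; ring, Real.rpow_natCast,
    Real.Gamma_eq_factorial_of_eq (n + a) (by push_cast; ring),
    Real.Gamma_eq_factorial_of_eq (n + b) (by push_cast; ring),
    Real.Gamma_eq_factorial_of_eq (n + a + b) (by push_cast; ring)]

theorem Nnorm_pos (n k m : ℕ) : 0 < Nnorm n k m := by
  unfold Nnorm
  rw [Wnorm_natCast]
  positivity

theorem add_mul_Nnorm_succ_left (n k q : ℕ) :
    (n + q + 1 : ℝ) * Nnorm n (k + 1) q = (n + k + 1) * Nnorm n k (q + 1) := by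
  unfold Nnorm
  rw [Wnorm_natCast, Wnorm_natCast, show n + k + (q + 1) = n + (k + 1) + q by ring,
    show n + (k + 1) = n + k + 1 by ring, show n + (q + 1) = n + q + 1 by ring,
    show 2 + (k + 1) + q = 2 + k + (q + 1) by ring, Nat.factorial_succ (n + k),
    Nat.factorial_succ (n + q)]
  push_cast
  ring

theorem add_div_sqrt_Nnorm (n k q : ℕ) :
    (n + q + 1 : ℝ) / √(Nnorm n k (q + 1)) =
      √((n + q + 1) * (n + k + 1)) / √(Nnorm n (k + 1) q) := by
  have hN := Nnorm_pos n k (q + 1)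
  have hN' := Nnorm_pos n (k + 1) q
  calc (n + q + 1 : ℝ) / √(Nnorm n k (q + 1)) = √((n + q + 1) ^ 2 / Nnorm n k (q + 1)) := by
        rw [Real.sqrt_div' _ hN.le, Real.sqrt_sq (by positivity)]
    _ = √((n + q + 1) * (n + k + 1) / Nnorm n (k + 1) q) := by
        congr 1
        field_simp
        linear_combination add_mul_Nnorm_succ_left n k q
    _ = _ := Real.sqrt_div' _ hN'.le

theorem deriv_pow_succ_mul_comp_add_div (m : ℕ) {p : ℝ → ℝ} {r : ℝ} (hr : r ≠ 0)
    (hp : DifferentiableAt ℝ p (2 * r ^ 2 - 1)) :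
    deriv (fun r => r ^ (m + 1) * p (2 * r ^ 2 - 1)) r +
        (m + 1 : ℕ) / r * (r ^ (m + 1) * p (2 * r ^ 2 - 1)) =
      2 * r ^ m *
        ((m + 1) * p (2 * r ^ 2 - 1) + (1 + (2 * r ^ 2 - 1)) * deriv p (2 * r ^ 2 - 1)) := by
  have hx : HasDerivAt (fun r : ℝ => 2 * r ^ 2 - 1) (4 * r) r := by
    refine (((hasDerivAt_pow 2 r).const_mul 2).sub_const 1).congr_deriv ?_
    push_cast
    ring
  have h : HasDerivAt (fun r => r ^ (m + 1) * p (2 * r ^ 2 - 1)) _ r :=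
    (hasDerivAt_pow (m + 1) r).fun_mul (HasDerivAt.comp (h₂ := p) r hp.hasDerivAt hx)
  rw [h.deriv, Nat.add_sub_cancel, pow_succ]
  field_simp
  push_cast
  ring

theorem Q_lowering (k m n : ℕ) (hm : 1 ≤ m) (r : ℝ) (hr : r ∈ Set.Ioo (0:ℝ) 1) :
    deriv (Q n k m) r + ((m : ℝ) / r) * Q n k m r =
      2 * Real.sqrt (((n : ℝ) + m) * (n + k + 1)) * Q n (k + 1) (m - 1) r := by
  obtain ⟨q, rfl⟩ : ∃ q, m = q + 1 := ⟨m - 1, by omega⟩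
  have hQ : Q n k (q + 1) = fun r =>
      r ^ (q + 1) * (jacobiP n k (q + 1 : ℕ) (2 * r ^ 2 - 1) / √(Nnorm n k (q + 1))) :=
    funext fun r => mul_div_assoc _ _ _
  have hradial := deriv_pow_succ_mul_comp_add_div q hr.1.ne'
    ((differentiable_jacobiP n k (q + 1 : ℕ)).div_const (√(Nnorm n k (q + 1))) (2 * r ^ 2 - 1))
  calc deriv (Q n k (q + 1)) r + ((q + 1 : ℕ) / r) * Q n k (q + 1) r
      = 2 * r ^ q * ((q + 1) * jacobiP n k (q + 1 : ℕ) (2 * r ^ 2 - 1) +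
          (1 + (2 * r ^ 2 - 1)) * deriv (jacobiP n k (q + 1 : ℕ)) (2 * r ^ 2 - 1)) /
            √(Nnorm n k (q + 1)) := by
        rw [hQ, hradial, deriv_div_const]
        push_cast
        ring
    _ = 2 * r ^ q * ((n + q + 1) / √(Nnorm n k (q + 1))) *
          jacobiP n (k + 1 : ℕ) q (2 * r ^ 2 - 1) := by
        rw [jacobiP_lowering]
        ring
    _ = _ := by
        rw [add_div_sqrt_Nnorm, Nat.add_sub_cancel, Q]
        push_cast
        rw [← add_assoc]
        ring
end

section
/- The derivative at the boundary satisfies (d/dr) Q_n^{k,m}(r)|_{r=1} = ((2n(n+k+1) + m(2n+k+1))/(k+1)) · Q_n^{k,m}(1). -/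
open Finset

theorem Real.inv_Gamma_eq_self_mul_inv_Gamma_add_one (s : ℝ) :
    (Real.Gamma s)⁻¹ = s * (Real.Gamma (s + 1))⁻¹ := by
  rcases eq_or_ne s 0 with rfl | hs
  · simp [Real.Gamma_zero]
  · rw [Real.Gamma_add_one hs, mul_inv, ← mul_assoc, mul_inv_cancel₀ hs, one_mul]

theorem sum_sub_one_pow_mul_add_one_pow_at_one (c : ℕ → ℝ) (n : ℕ) :
    ∑ s ∈ range (n + 1), c s * (1 - 1 : ℝ) ^ (n - s) * (1 + 1) ^ s = 2 ^ n * c n := by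
  rw [sum_eq_single_of_mem n (self_mem_range_succ n) fun s hs hsn => by
    simp [Nat.sub_ne_zero_of_lt (lt_of_le_of_ne (mem_range_succ_iff.mp hs) hsn)]]
  norm_num [mul_comm]

theorem hasDerivAt_sum_sub_one_pow_mul_add_one_pow_at_one (c : ℕ → ℝ) (n : ℕ) :
    HasDerivAt (fun x : ℝ => ∑ s ∈ range (n + 2), c s * (x - 1) ^ (n + 1 - s) * (x + 1) ^ s)
      (2 ^ n * (c n + (n + 1) * c (n + 1))) 1 := by
  refine (HasDerivAt.fun_sum fun s _ =>
    ((((hasDerivAt_id (1 : ℝ)).sub_const 1).pow (n + 1 - s)).const_mul (c s)).mul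
      (((hasDerivAt_id 1).add_const 1).pow s)).congr_deriv ?_
  rw [sum_range_succ, sum_range_succ, sum_eq_zero fun s hs => by
    have hs : s < n := mem_range.mp hs
    simp only [id, Pi.pow_apply, sub_self, show n + 1 - s - 1 = n - s by omega]
    rw [zero_pow (by omega), zero_pow (by omega)]
    ring]
  simp only [add_tsub_cancel_left, Nat.cast_one, id_eq, sub_self, tsub_self, pow_zero, mul_one,
    Pi.pow_apply, pow_one, mul_zero, zero_mul, add_zero, zero_add, CharP.cast_eq_zero, zero_tsub,
    Nat.cast_add, add_tsub_cancel_right]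
  ring

noncomputable def jacobiCoeff (n : ℕ) (a b : ℝ) (s : ℕ) : ℝ :=
  (Real.Gamma (a + n + 1) / (Real.Gamma (a + n - s + 1) * (Nat.factorial s))) *
    (Real.Gamma (b + n + 1) / (Real.Gamma (b + s + 1) * (Nat.factorial (n - s))))

section Jacobi

variable (n : ℕ) (a b : ℝ)

theorem jacobiP_eq_sum (x : ℝ) :
    jacobiP n a b x = (2 ^ n)⁻¹ *
      ∑ s ∈ range (n + 1), jacobiCoeff n a b s * (x - 1) ^ (n - s) * (x + 1) ^ s := by
  rw [jacobiP, one_div]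
  rfl

/-- At a pole of `Γ` both sides vanish, because `0⁻¹ = 0`. -/
theorem add_one_mul_jacobiCoeff_succ :
    (a + 1) * jacobiCoeff (n + 1) a b n =
      (n + 1) * (n + b + 1) * jacobiCoeff (n + 1) a b (n + 1) := by
  have ha := Real.inv_Gamma_eq_self_mul_inv_Gamma_add_one (a + 1)
  have hb := Real.inv_Gamma_eq_self_mul_inv_Gamma_add_one (b + n + 1)
  simp only [jacobiCoeff, Nat.sub_self, Nat.add_sub_cancel_left, Nat.factorial_succ]
  push_cast
  rw [show a + (n + 1) - n + 1 = a + 1 + 1 by ring, show a + (n + 1) - (n + 1) + 1 = a + 1 by ring,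
    show b + (n + 1) + 1 = b + n + 1 + 1 by ring]
  simp only [Nat.factorial_zero, Nat.cast_one, mul_one, div_eq_mul_inv, mul_inv, ha, hb]
  field_simp
  ring

theorem jacobiP_one : jacobiP n a b 1 = jacobiCoeff n a b n := by
  rw [jacobiP_eq_sum, sum_sub_one_pow_mul_add_one_pow_at_one,
    inv_mul_cancel_left₀ (by positivity)]

theorem hasDerivAt_jacobiP_succ_one : HasDerivAt (jacobiP (n + 1) a b)
    ((jacobiCoeff (n + 1) a b n + (n + 1) * jacobiCoeff (n + 1) a b (n + 1)) / 2) 1 := by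
  have h := (hasDerivAt_sum_sub_one_pow_mul_add_one_pow_at_one
    (jacobiCoeff (n + 1) a b) n).const_mul ((2 : ℝ) ^ (n + 1))⁻¹
  rw [show jacobiP (n + 1) a b = _ from funext (jacobiP_eq_sum (n + 1) a b)]
  refine h.congr_deriv ?_
  rw [pow_succ]
  field_simp

theorem hasDerivAt_jacobiP_one (ha : a + 1 ≠ 0) :
    HasDerivAt (jacobiP n a b) (n * (n + a + b + 1) / (2 * (a + 1)) * jacobiP n a b 1) 1 := by
  cases n with
  | zero =>
    have h0 : jacobiP 0 a b = fun _ => jacobiP 0 a b 1 := funext fun x => by simp [jacobiP]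
    rw [h0]
    simpa using hasDerivAt_const (1 : ℝ) (jacobiP 0 a b 1)
  | succ n =>
    refine (hasDerivAt_jacobiP_succ_one n a b).congr_deriv ?_
    have key := add_one_mul_jacobiCoeff_succ n a b
    rw [jacobiP_one]
    field_simp
    push_cast
    linear_combination key

end Jacobi

theorem hasDerivAt_Q_one (n k m : ℕ) :
    HasDerivAt (Q n k m) ((m + 2 * n * (n + k + m + 1) / (k + 1)) * Q n k m 1) 1 := by
  have hJ := hasDerivAt_jacobiP_one n k m (by positivity)
  have hsq : HasDerivAt (fun r : ℝ => 2 * r ^ 2 - 1) 4 1 :=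
    (((hasDerivAt_pow 2 (1 : ℝ)).const_mul 2).sub_const 1).congr_deriv (by norm_num)
  have hQ := ((hasDerivAt_pow m (1 : ℝ)).mul
    (HasDerivAt.comp_of_eq 1 hJ hsq (by norm_num))).div_const (Real.sqrt (Nnorm n k m))
  refine hQ.congr_deriv ?_
  simp only [Q, Function.comp_apply]
  rw [show (2 : ℝ) * 1 ^ 2 - 1 = 1 by norm_num]
  simp only [one_pow, mul_one, one_mul]
  field_simp
  ring

theorem Q_deriv_at_one (k m n : ℕ) :
    deriv (Q n k m) 1 =
      ((2 * (n : ℝ) * (n + k + 1) + m * (2 * n + k + 1)) / (k + 1)) * Q n k m 1 := by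
  rw [(hasDerivAt_Q_one n k m).deriv]
  congr 1
  field_simp
  ring
end
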